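/- Let p ∈ R^k have strictly positive entries summing to 1, and let M = D_p - p p^T. Then the image of M equals the orthogonal complement of the span of (1,...,1), and M restricted to this orthogonal complement is an invertible linear operator. -/

import Mathlib

open Matrix

/-- The image of `M = D_p - p pᵀ` is the orthogonal complement of the span of `(1,...,1)`,
and `M` restricted to this orthogonal complement is an invertible linear operator. -/
theorem stmt1 {k : ℕ} (p : Fin k → ℝ) (hp : ∀ i, 0 < p i)
    (hsum : ∑ i, p i = 1)
    (M : Matrix (Fin k) (Fin k) ℝ)
    (hM : M = Matrix.diagonal p - Matrix.of fun i j => p i * p j) :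
    (∀ y : Fin k → ℝ, (∃ x, M.mulVec x = y) ↔ ∑ i, y i = 0) ∧
    (∀ y : Fin k → ℝ, ∑ i, y i = 0 →
      ∃! x : Fin k → ℝ, (∑ i, x i = 0 ∧ M.mulVec x = y)) := by
  have hMx : ∀ x : Fin k → ℝ, ∀ i, M.mulVec x i = p i * x i - p i * ∑ j, p j * x j := by
    intro x i
    subst hM
    simp only [Matrix.mulVec, dotProduct, Matrix.sub_apply, Matrix.diagonal_apply,
      Matrix.of_apply, sub_mul, Finset.sum_sub_distrib, ite_mul, zero_mul, Finset.sum_ite_eq,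
      Finset.mem_univ, if_true, mul_assoc, ← Finset.mul_sum]
  -- sum of M.mulVec x is zero
  have hsum0 : ∀ x : Fin k → ℝ, ∑ i, M.mulVec x i = 0 := by
    intro x
    simp only [hMx, Finset.sum_sub_distrib, ← Finset.sum_mul, hsum, one_mul, sub_self]
  -- existence with given sum condition
  have hexist : ∀ y : Fin k → ℝ, ∑ i, y i = 0 → M.mulVec (fun i => y i / p i) = y := by
    intro y hy
    funext i
    rw [hMx]
    have : ∀ j, p j * (y j / p j) = y j := fun j => by
      rw [mul_comm, div_mul_cancel₀ _ (hp j).ne']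
    simp only [this, hy, mul_zero, sub_zero]
  have hone : M.mulVec (fun _ => (1:ℝ)) = 0 := by
    funext i
    rw [hMx]
    simp [hsum]
  constructor
  · intro y
    constructor
    · rintro ⟨x, rfl⟩
      exact hsum0 x
    · intro hy
      exact ⟨fun i => y i / p i, hexist y hy⟩
  · intro y hy
    set c : ℝ := (∑ i, y i / p i) / k with hc
    refine ⟨fun i => y i / p i - c, ?_, ?_⟩
    · constructor
      · rcases Nat.eq_zero_or_pos k with hk | hk
        · subst hk; simp
        · have hk' : (k : ℝ) ≠ 0 := by positivity
          simp only [Finset.sum_sub_distrib, Finset.sum_const, Finset.card_univ,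
            Fintype.card_fin, nsmul_eq_mul, hc]
          field_simp
          ring
      · have : M.mulVec (fun i => y i / p i - c) =
            M.mulVec (fun i => y i / p i) - c • M.mulVec (fun _ => (1:ℝ)) := by
          have harg : (fun i => y i / p i - c) =
              ((fun i => y i / p i) - c • fun _ => (1:ℝ)) := by
            funext i; simp
          rw [harg, Matrix.mulVec_sub, Matrix.mulVec_smul]
        rw [this, hone, hexist y hy]
        simp
    · rintro x ⟨hxs, hxy⟩
      -- uniqueness
      rcases Nat.eq_zero_or_pos k with hk | hk
      · funext i; exact absurd i.2 (by omega)
      have key : ∀ i, x i = y i / p i + (∑ j, p j * x j) := by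
        intro i
        have h1 := congrFun hxy i
        rw [hMx] at h1
        have hpi := (hp i).ne'
        field_simp at h1 ⊢
        linarith [h1]
      have hsx : (0:ℝ) = ∑ i, y i / p i + k * (∑ j, p j * x j) := by
        rw [← hxs]
        calc ∑ i, x i = ∑ i, (y i / p i + (∑ j, p j * x j)) :=
              Finset.sum_congr rfl fun i _ => key i
          _ = ∑ i, y i / p i + k * (∑ j, p j * x j) := by
              rw [Finset.sum_add_distrib]
              simp [Finset.card_univ, mul_comm]
      have hk' : (k : ℝ) ≠ 0 := by positivity
      have hs : (∑ j, p j * x j) = -c := by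
        rw [hc]
        field_simp at hsx ⊢
        linarith
      funext i
      rw [key i, hs]
      ring
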